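/- arXiv:0802.2696 — 2 statements merged into one kernel-verified Lean document; each statement's English description precedes it below -/
import Mathlib

section
/- For a cobweb poset Π designated by a sequence F with F₀ = 1, and any element x of rank k ≥ 1, the Möbius function value μ(0̂, x) from the minimal element 0̂ = ⟨1,0⟩ to x equals (-1)^k · ∏_{i=1}^{k-1} (F_i - 1). -/
/-!
Since `F 0 = 1`, the vertex `⟨1,0⟩` is the only one of rank `0`, and the interval `[0̂, x]` for `x`
of rank `k` consists of `x` together with all `F s` vertices of each rank `s < k`. By induction on
the rank, `μ(0̂, ·)` is constant on each rank, say `m s`, and the defining recursion of `μ` becomes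
`∑_{s<k} F s * m s + m k = 0`. The product formula solves it, because it satisfies
`m (k+1) = -(F k - 1) * m k` for `k ≥ 1`.
-/

/-- The cobweb order relation on pairs `(j, s)` where `s` is the level:
`⟨j,s⟩ ≤ ⟨q,u⟩` iff `s < u` or (`s = u` and `j = q`). -/
def cobwebLE (p q : ℕ × ℕ) : Prop :=
  p.2 < q.2 ∨ (p.2 = q.2 ∧ p.1 = q.1)

/-- Vertices of the cobweb poset designated by `F`: pairs `(j, s)` with `1 ≤ j ≤ F s`. -/
def CobwebVertex (F : ℕ → ℕ) : Type :=
  {p : ℕ × ℕ // 1 ≤ p.1 ∧ p.1 ≤ F p.2}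

instance (F : ℕ → ℕ) : PartialOrder (CobwebVertex F) where
  le x y := cobwebLE x.val y.val
  le_refl x := Or.inr ⟨rfl, rfl⟩
  le_trans x y z hxy hyz := by
    rcases hxy with h | ⟨h1, h2⟩
    · rcases hyz with h' | ⟨h1', h2'⟩
      · exact Or.inl (h.trans h')
      · exact Or.inl (h1' ▸ h)
    · rcases hyz with h' | ⟨h1', h2'⟩
      · exact Or.inl (h1 ▸ h')
      · exact Or.inr ⟨h1.trans h1', h2.trans h2'⟩
  le_antisymm x y hxy hyx := by
    rcases hxy with h | ⟨h1, h2⟩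
    · rcases hyx with h' | ⟨h1', h2'⟩
      · exact absurd (h.trans h') (lt_irrefl _)
      · exact absurd (h1' ▸ h) (lt_irrefl _)
    · rcases hyx with h' | ⟨h1', h2'⟩
      · exact absurd (h1 ▸ h') (lt_irrefl _)
      · exact Subtype.ext (Prod.ext h2 h1)

/-- The rank of a vertex is its level. -/
def rank {F : ℕ → ℕ} (x : CobwebVertex F) : ℕ := x.val.2

open Finset

namespace CobwebVertex

variable {F : ℕ → ℕ}

lemma le_iff {a b : CobwebVertex F} :
    a ≤ b ↔ rank a < rank b ∨ (rank a = rank b ∧ a.val.1 = b.val.1) := Iff.rfl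

lemma lt_of_rank_lt {a b : CobwebVertex F} (h : rank a < rank b) : a < b :=
  lt_of_le_of_ne (le_iff.2 (Or.inl h)) fun e => by subst e; exact lt_irrefl _ h

lemma eq_of_rank_eq_zero (hF0 : F 0 = 1) {a b : CobwebVertex F} (ha : rank a = 0)
    (hb : rank b = 0) : a = b := by
  obtain ⟨⟨i, s⟩, hi⟩ := a
  obtain ⟨⟨j, t⟩, hj⟩ := b
  simp only [rank] at ha hb hi hj
  subst ha hb
  rw [hF0] at hi hj
  congr
  omega

lemma le_of_rank_eq_zero (hF0 : F 0 = 1) {a : CobwebVertex F} (ha : rank a = 0)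
    (b : CobwebVertex F) : a ≤ b := by
  rcases Nat.eq_zero_or_pos (rank b) with hb | hb
  · exact (eq_of_rank_eq_zero hF0 ha hb).le
  · exact (lt_of_rank_lt (ha ▸ hb)).le

instance : DecidableEq (CobwebVertex F) :=
  inferInstanceAs (DecidableEq {p : ℕ × ℕ // 1 ≤ p.1 ∧ p.1 ≤ F p.2})

variable (F) in
def level (s : ℕ) : Finset (CobwebVertex F) :=
  (Icc 1 (F s) ×ˢ ({s} : Finset ℕ)).subtype fun p : ℕ × ℕ => 1 ≤ p.1 ∧ p.1 ≤ F p.2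

lemma mem_level {a : CobwebVertex F} {s : ℕ} : a ∈ level F s ↔ rank a = s := by
  obtain ⟨⟨i, t⟩, hi⟩ := a
  change (⟨(i, t), hi⟩ : {p : ℕ × ℕ // 1 ≤ p.1 ∧ p.1 ≤ F p.2}) ∈ Finset.subtype _ _ ↔ t = s
  rw [mem_subtype, mem_product, mem_Icc, mem_singleton]
  constructor
  · exact And.right
  · rintro rfl
    exact ⟨hi, rfl⟩

lemma card_level (s : ℕ) : #(level F s) = F s := by
  change #(Finset.subtype (fun p : ℕ × ℕ => 1 ≤ p.1 ∧ p.1 ≤ F p.2) _) = F s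
  rw [card_subtype, filter_true_of_mem, card_product, Nat.card_Icc, card_singleton, mul_one,
    Nat.add_sub_cancel]
  intro p hp
  rw [mem_product, mem_Icc, mem_singleton] at hp
  exact hp.2 ▸ hp.1

lemma Iic_eq (x : CobwebVertex F) :
    Set.Iic x = ↑(insert x ((range (rank x)).biUnion (level F))) := by
  ext z
  simp only [Set.mem_Iic, coe_insert, coe_biUnion, coe_range, Set.mem_insert_iff,
    Set.mem_iUnion, Set.mem_Iio, mem_coe, mem_level, exists_prop, exists_eq_right', le_iff]
  constructor
  · rintro (h | ⟨hr, h1⟩)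
    · exact Or.inr h
    · exact Or.inl (Subtype.ext (Prod.ext h1 hr))
  · rintro (rfl | h)
    · exact Or.inr ⟨rfl, rfl⟩
    · exact Or.inl h

lemma finsum_mem_Iic {M : Type*} [AddCommMonoid M] (f : CobwebVertex F → M)
    (x : CobwebVertex F) :
    ∑ᶠ z ∈ Set.Iic x, f z = f x + ∑ s ∈ range (rank x), ∑ z ∈ level F s, f z := by
  have hx : x ∉ (range (rank x)).biUnion (level F) := by
    simp [mem_level]
  have hdisj : (↑(range (rank x)) : Set ℕ).PairwiseDisjoint (level F) :=
    fun s _ t _ hst => disjoint_left.2 fun z hs ht =>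
      hst ((mem_level.1 hs).symm.trans (mem_level.1 ht))
  rw [Iic_eq, finsum_mem_coe_finset, sum_insert hx, sum_biUnion hdisj]

end CobwebVertex

-- `k - 1` truncates at `k = 0`, so the formula also gives `μ(0̂, 0̂) = 1`.
def cobwebMobius (F : ℕ → ℕ) (k : ℕ) : ℤ :=
  (-1) ^ k * ∏ i ∈ Icc 1 (k - 1), ((F i : ℤ) - 1)

lemma cobwebMobius_zero (F : ℕ → ℕ) : cobwebMobius F 0 = 1 := by
  simp [cobwebMobius]

lemma cobwebMobius_succ_succ (F : ℕ → ℕ) (k : ℕ) :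
    cobwebMobius F (k + 2) = -((F (k + 1) : ℤ) - 1) * cobwebMobius F (k + 1) := by
  simp only [cobwebMobius, show k + 2 - 1 = k + 1 from rfl, Nat.add_sub_cancel,
    prod_Icc_succ_top (Nat.le_add_left 1 k)]
  ring

lemma sum_mul_cobwebMobius (F : ℕ → ℕ) (hF0 : F 0 = 1) {k : ℕ} (hk : 1 ≤ k) :
    ∑ s ∈ range k, (F s : ℤ) * cobwebMobius F s = -cobwebMobius F k := by
  induction k, hk using Nat.le_induction with
  | base => simp [cobwebMobius, hF0]
  | succ k hk ih =>
    obtain ⟨k, rfl⟩ := Nat.exists_eq_add_of_le' hk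
    rw [sum_range_succ, ih, cobwebMobius_succ_succ]
    ring

open CobwebVertex in
theorem cobweb_mobius_formula_general (F : ℕ → ℕ) (hF0 : F 0 = 1)
    (μ : CobwebVertex F → CobwebVertex F → ℤ)
    (zero : CobwebVertex F) (hzero : zero.val = (1, 0))
    (hμ_refl : ∀ x : CobwebVertex F, μ x x = 1)
    (hμ_sum : ∀ x y : CobwebVertex F, x < y → ∑ᶠ z ∈ Set.Icc x y, μ x z = 0)
    (x : CobwebVertex F) (k : ℕ) (hr : rank x = k) :
    μ zero x = (-1 : ℤ) ^ k * ∏ i ∈ Finset.Icc 1 (k - 1), ((F i : ℤ) - 1) := by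
  have hzero_rank : rank zero = 0 := congrArg Prod.snd hzero
  have hIcc : ∀ y, Set.Icc zero y = Set.Iic y := fun y =>
    Set.ext fun z => ⟨And.right, fun h => ⟨le_of_rank_eq_zero hF0 hzero_rank z, h⟩⟩
  change μ zero x = cobwebMobius F k
  induction k using Nat.strong_induction_on generalizing x with
  | _ k ih =>
  rcases Nat.eq_zero_or_pos k with rfl | hk
  · rw [eq_of_rank_eq_zero hF0 hr hzero_rank, hμ_refl, cobwebMobius_zero]
  · have hsum := hμ_sum zero x (lt_of_rank_lt (hzero_rank ▸ hr ▸ hk))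
    have hlevel : ∀ s ∈ range k, ∑ z ∈ level F s, μ zero z = F s * cobwebMobius F s :=
      fun s hs => by
        rw [sum_congr rfl fun z hz => ih s (mem_range.1 hs) z (mem_level.1 hz), sum_const,
          card_level, nsmul_eq_mul]
    rw [hIcc, finsum_mem_Iic, hr, sum_congr rfl hlevel, sum_mul_cobwebMobius F hF0 hk] at hsum
    linarith

theorem cobweb_mobius_formula (F : ℕ → ℕ) (hF0 : F 0 = 1)
    (μ : CobwebVertex F → CobwebVertex F → ℤ)
    (zero : CobwebVertex F) (hzero : zero.val = (1, 0))
    (hμ_refl : ∀ x : CobwebVertex F, μ x x = 1)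
    (hμ_sum : ∀ x y : CobwebVertex F, x < y → ∑ᶠ z ∈ Set.Icc x y, μ x z = 0)
    (x : CobwebVertex F) (k : ℕ) (hk : 1 ≤ k) (hr : rank x = k) :
    μ zero x = (-1 : ℤ) ^ k * ∏ i ∈ Finset.Icc 1 (k - 1), ((F i : ℤ) - 1) :=
  cobweb_mobius_formula_general F hF0 μ zero hzero hμ_refl hμ_sum x k hr
end

section
/- For the cobweb poset designated by F, Σ_{x ∈ P_n} μ(0̂,x) = Σ_{k=0}^n F_k·(-1)^k·∏_{i=1}^{k-1}(F_i-1), and this sum equals 0 if F₁ = 1 and n ≥ 1. -/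
/-- The Möbius value at rank `k`. -/
def mval (F : ℕ → ℕ) (k : ℕ) : ℤ :=
  (-1 : ℤ) ^ k * ∏ i ∈ Finset.Icc 1 (k - 1), ((F i : ℤ) - 1)

lemma le_iff {F : ℕ → ℕ} (x y : CobwebVertex F) :
    x ≤ y ↔ (rank x < rank y ∨ (rank x = rank y ∧ x.val.1 = y.val.1)) := Iff.rfl

lemma finite_rank_le (F : ℕ → ℕ) (n : ℕ) :
    {x : CobwebVertex F | rank x ≤ n}.Finite := by
  set M := (Finset.range (n + 1)).sup F with hM
  have : {x : CobwebVertex F | rank x ≤ n} ⊆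
      Subtype.val ⁻¹' (Set.Icc ((0, 0) : ℕ × ℕ) (M, n)) := by
    intro x hx
    change x.val ∈ Set.Icc ((0, 0) : ℕ × ℕ) (M, n)
    simp only [Set.mem_preimage, Set.mem_Icc, Prod.le_def]
    refine ⟨⟨Nat.zero_le _, Nat.zero_le _⟩, ?_, hx⟩
    calc x.val.1 ≤ F x.val.2 := x.property.2
      _ ≤ M := Finset.le_sup (Finset.mem_range.2 (Nat.lt_succ_of_le hx))
  exact Set.Finite.subset ((Set.finite_Icc _ _).preimage
    (Subtype.val_injective.injOn)) this

lemma cob_zero_le {F : ℕ → ℕ} (hF0 : F 0 = 1) (zero : CobwebVertex F)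
    (hzero : zero.val = (1, 0)) (z : CobwebVertex F) : zero ≤ z := by
  rcases Nat.eq_zero_or_pos (rank z) with h | h
  · have : z = zero := by
      apply Subtype.ext
      rw [hzero]
      have h2 := z.property.2
      rw [show z.val.2 = 0 from h, hF0] at h2
      exact Prod.ext (le_antisymm h2 z.property.1) h
    exact this ▸ le_refl zero
  · exact Or.inl (by rw [show zero.val.2 = 0 by rw [hzero]]; exact h)

lemma sum_level (F : ℕ → ℕ) {n k : ℕ} (hk : k ≤ n) (c : ℤ) :
    ∑ x ∈ (finite_rank_le F n).toFinset.filter (fun x => rank x = k), c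
      = (F k : ℤ) * c := by
  rw [Finset.sum_const, nsmul_eq_mul]
  congr 1
  have hcard : ((finite_rank_le F n).toFinset.filter (fun x => rank x = k)).card
      = (Finset.Icc 1 (F k)).card := by
    apply Finset.card_bij (fun x _ => x.val.1)
    · intro a ha
      simp only [Finset.mem_filter, Set.Finite.mem_toFinset, Set.mem_setOf_eq] at ha
      refine Finset.mem_Icc.2 ⟨a.property.1, ?_⟩
      rw [show k = rank a from ha.2.symm]
      exact a.property.2
    · intro a ha b hb hab
      simp only [Finset.mem_filter, Set.Finite.mem_toFinset, Set.mem_setOf_eq] at ha hb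
      exact Subtype.ext (Prod.ext hab (ha.2.trans hb.2.symm))
    · intro b hb
      rcases Finset.mem_Icc.1 hb with ⟨h1, h2⟩
      refine ⟨⟨(b, k), h1, h2⟩, ?_, rfl⟩
      exact Finset.mem_filter.2 ⟨(Set.Finite.mem_toFinset _).2 hk, rfl⟩
  rw [hcard]
  simp [Nat.card_Icc]

lemma sum_rank_le (F : ℕ → ℕ) (μ : CobwebVertex F → CobwebVertex F → ℤ)
    (zero : CobwebVertex F) (n : ℕ)
    (H : ∀ x : CobwebVertex F, rank x ≤ n → μ zero x = mval F (rank x)) :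
    ∑ᶠ x ∈ {x : CobwebVertex F | rank x ≤ n}, μ zero x
      = ∑ k ∈ Finset.range (n + 1), (F k : ℤ) * mval F k := by
  rw [finsum_mem_eq_finite_toFinset_sum _ (finite_rank_le F n)]
  rw [← Finset.sum_fiberwise_of_maps_to (g := rank) (t := Finset.range (n + 1))
    (fun x hx => Finset.mem_range.2 (Nat.lt_succ_of_le
      (by simpa using hx)))]
  refine Finset.sum_congr rfl fun k hk => ?_
  have hk' : k ≤ n := Nat.lt_succ_iff.1 (Finset.mem_range.1 hk)
  rw [← sum_level F hk' (mval F k)]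
  refine Finset.sum_congr rfl fun x hx => ?_
  simp only [Finset.mem_filter, Set.Finite.mem_toFinset, Set.mem_setOf_eq] at hx
  rw [H x hx.1, hx.2]

lemma sum_m (F : ℕ → ℕ) (hF0 : F 0 = 1) (k : ℕ) :
    ∑ j ∈ Finset.range (k + 1), (F j : ℤ) * mval F j = - mval F (k + 1) := by
  induction k with
  | zero => simp [mval, hF0]
  | succ k ih =>
      rw [Finset.sum_range_succ, ih]
      have h1 : mval F (k + 2) = -((F (k+1) : ℤ) - 1) * mval F (k + 1) := by
        simp only [mval, show k + 2 - 1 = k + 1 from rfl, show k + 1 - 1 = k from rfl]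
        rw [Finset.prod_Icc_succ_top (Nat.succ_le_succ (Nat.zero_le k))]
        ring
      rw [h1]; ring

lemma mu_eq (F : ℕ → ℕ) (hF0 : F 0 = 1)
    (μ : CobwebVertex F → CobwebVertex F → ℤ)
    (zero : CobwebVertex F) (hzero : zero.val = (1, 0))
    (hμ_refl : ∀ x : CobwebVertex F, μ x x = 1)
    (hμ_sum : ∀ x y : CobwebVertex F, x < y → ∑ᶠ z ∈ Set.Icc x y, μ x z = 0) :
    ∀ k, ∀ x : CobwebVertex F, rank x = k → μ zero x = mval F k := by
  intro k
  induction k using Nat.strong_induction_on with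
  | _ k ih =>
    intro x hx
    match k with
    | 0 =>
      have : x = zero := by
        apply Subtype.ext
        rw [hzero]
        have h2 := x.property.2
        rw [show x.val.2 = 0 from hx, hF0] at h2
        exact Prod.ext (le_antisymm h2 x.property.1) hx
      rw [this, hμ_refl]
      simp [mval]
    | (j + 1) =>
      have hlt : zero < x := by
        refine lt_of_le_of_ne (cob_zero_le hF0 zero hzero x) ?_
        intro h
        rw [← h] at hx
        simp [rank, hzero] at hx
      have hicc : Set.Icc zero x = insert x {z : CobwebVertex F | rank z ≤ j} := by
        ext z
        simp only [Set.mem_Icc, Set.mem_insert_iff, Set.mem_setOf_eq]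
        constructor
        · rintro ⟨-, hzx⟩
          rcases hzx with h | ⟨h1, h2⟩
          · right
            simp only [rank] at hx ⊢
            omega
          · left; exact Subtype.ext (Prod.ext h2 h1)
        · rintro (h | h)
          · exact ⟨cob_zero_le hF0 zero hzero z, le_of_eq h⟩
          · exact ⟨cob_zero_le hF0 zero hzero z, Or.inl (by simp only [rank] at hx h; omega)⟩
      have hns : x ∉ {z : CobwebVertex F | rank z ≤ j} := by
        simp [Set.mem_setOf_eq, hx]
      have h0 := hμ_sum zero x hlt
      rw [hicc, finsum_mem_insert _ hns (finite_rank_le F j)] at h0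
      have hsum : ∑ᶠ z ∈ {z : CobwebVertex F | rank z ≤ j}, μ zero z
          = ∑ i ∈ Finset.range (j + 1), (F i : ℤ) * mval F i :=
        sum_rank_le F μ zero j (fun z hz => ih (rank z) (Nat.lt_succ_of_le hz) z rfl)
      rw [hsum, sum_m F hF0 j] at h0
      linarith

theorem cobweb_mobius_sum (F : ℕ → ℕ) (hF0 : F 0 = 1)
    (μ : CobwebVertex F → CobwebVertex F → ℤ)
    (zero : CobwebVertex F) (hzero : zero.val = (1, 0))
    (hμ_refl : ∀ x : CobwebVertex F, μ x x = 1)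
    (hμ_sum : ∀ x y : CobwebVertex F, x < y → ∑ᶠ z ∈ Set.Icc x y, μ x z = 0)
    (n : ℕ) :
    ∑ᶠ x ∈ {x : CobwebVertex F | rank x ≤ n}, μ zero x =
      (∑ k ∈ Finset.range (n + 1),
        (F k : ℤ) * (-1 : ℤ) ^ k * ∏ i ∈ Finset.Icc 1 (k - 1), ((F i : ℤ) - 1)) ∧
    (F 1 = 1 → 1 ≤ n → ∑ᶠ x ∈ {x : CobwebVertex F | rank x ≤ n}, μ zero x = 0) := by
  have key : ∑ᶠ x ∈ {x : CobwebVertex F | rank x ≤ n}, μ zero x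
      = ∑ k ∈ Finset.range (n + 1), (F k : ℤ) * mval F k :=
    sum_rank_le F μ zero n
      (fun x _ => mu_eq F hF0 μ zero hzero hμ_refl hμ_sum (rank x) x rfl)
  constructor
  · rw [key]
    exact Finset.sum_congr rfl fun k _ => by rw [mval, mul_assoc]
  · intro hF1 hn
    rw [key, sum_m F hF0 n]
    have : mval F (n + 1) = 0 := by
      rw [mval]
      apply mul_eq_zero_of_right
      apply Finset.prod_eq_zero (i := 1)
      · exact Finset.mem_Icc.2 ⟨le_refl 1, by omega⟩
      · rw [hF1]; ring
    rw [this, neg_zero]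
end
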